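/- arXiv:2210.11119 — 7 statements merged into one kernel-verified Lean document; each statement's English description precedes it below -/
import Mathlib

section
/- Unimodality of E{T_n}·E{P_n} in the rate threshold (Lemma 2). Let Φ(G) := e^{2λG} · ∫_G^∞ e^{−λg}/ln(1 + c·g) dg for G > 0. Then there exists a point G‡ > 0 such that Φ is strictly decreasing on (0, G‡] and strictly increasing on [G‡, ∞). -/
open MeasureTheory Set

/-!
Differentiating, `Φ'(G) = e^{λG} / ln(1 + cG) · (2λ J(G) - 1)`, where `J = normalizedTail`; the
substitution `g = G + t` turns `e^{λG} ln(1 + cG) ∫_G^∞ e^{-λg} / ln(1 + cg) dg` into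
`J(G) = ∫_0^∞ e^{-λt} ln(1 + cG) / ln(1 + c(G + t)) dt`.
For fixed `t > 0` the ratio `ln(1 + cG) / ln(1 + c(G + t))` is strictly increasing in `G`,
tends to `0` as `G → 0⁺` and to `1` as `G → ∞`; by dominated convergence `J` increases
strictly from `0` to `1/λ`. Hence `2λ J - 1` changes sign exactly once, at `G‡`.
-/

open Filter Topology Real

theorem StrictMonoOn.exists_neg_pos_Ioi {h : ℝ → ℝ} {p a b : ℝ}
    (hh : StrictMonoOn h (Ioi p)) (ha : p < a) (hb : p < b) (hha : h a < 0) (hhb : 0 < h b) :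
    ∃ d, p < d ∧ (∀ x ∈ Ioo p d, h x < 0) ∧ ∀ x ∈ Ioi d, 0 < h x := by
  set S := {x | p < x ∧ h x ≤ 0}
  have hS : BddAbove S := ⟨b, fun x hx => not_lt.1 fun hbx =>
    (hhb.trans (hh hb (hb.trans hbx) hbx)).not_ge hx.2⟩
  have haS : a ∈ S := ⟨ha, hha.le⟩
  have hpd : p < sSup S := ha.trans_le (le_csSup hS haS)
  refine ⟨sSup S, hpd, fun x hx => ?_, fun x hx => ?_⟩
  · obtain ⟨s, hs, hxs⟩ := exists_lt_of_lt_csSup ⟨a, haS⟩ hx.2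
    exact (hh hx.1 hs.1 hxs).trans_le hs.2
  · by_contra! hx'
    exact (le_csSup hS ⟨hpd.trans hx, hx'⟩).not_gt hx

theorem strictAntiOn_Ioc_and_strictMonoOn_Ici_of_hasDerivAt {φ φ' : ℝ → ℝ} {p d : ℝ}
    (hd : p < d) (hφ : ∀ x ∈ Ioi p, HasDerivAt φ (φ' x) x)
    (hneg : ∀ x ∈ Ioo p d, φ' x < 0) (hpos : ∀ x ∈ Ioi d, 0 < φ' x) :
    StrictAntiOn φ (Ioc p d) ∧ StrictMonoOn φ (Ici d) := by
  have hcont : ContinuousOn φ (Ioi p) := fun x hx => (hφ x hx).continuousAt.continuousWithinAt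
  have hIci : Ici d ⊆ Ioi p := Ici_subset_Ioi.2 hd
  constructor
  · refine strictAntiOn_of_hasDerivWithinAt_neg (convex_Ioc p d)
      (hcont.mono Ioc_subset_Ioi_self) (fun x hx => ?_) (by rwa [interior_Ioc])
    rw [interior_Ioc] at hx
    exact (hφ x hx.1).hasDerivWithinAt
  · refine strictMonoOn_of_hasDerivWithinAt_pos (convex_Ici d) (hcont.mono hIci)
      (fun x hx => ?_) (by rwa [interior_Ici])
    rw [interior_Ici] at hx
    exact (hφ x (hIci (mem_Ici.2 (le_of_lt hx)))).hasDerivWithinAt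

theorem MeasureTheory.setIntegral_lt_setIntegral_of_forall_lt {X : Type*} [MeasurableSpace X]
    {μ : Measure X} {s : Set X} {f g : X → ℝ} (hs : MeasurableSet s) (hμs : μ s ≠ 0)
    (hf : IntegrableOn f s μ) (hg : IntegrableOn g s μ) (hfg : ∀ x ∈ s, f x < g x) :
    ∫ x in s, f x ∂μ < ∫ x in s, g x ∂μ := by
  rw [← sub_pos, ← integral_sub hg hf]
  refine (setIntegral_pos_iff_support_of_nonneg_ae ?_ (hg.sub hf)).2 ?_
  · filter_upwards [ae_restrict_mem hs] with x hx using sub_nonneg.2 (hfg x hx).le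
  · have hsupp : s ⊆ Function.support (g - f) := fun x hx => sub_ne_zero.2 (hfg x hx).ne'
    rwa [inter_eq_right.2 hsupp, pos_iff_ne_zero]

namespace RateThreshold

/-- Shannon rate per unit bandwidth at channel gain `g`, so that `capacity c (G r) = r / B`. -/
noncomputable def capacity (c g : ℝ) : ℝ := Real.log (1 + c * g)

variable {lam c : ℝ}

@[simp] lemma capacity_zero : capacity c 0 = 0 := by simp [capacity]

@[fun_prop] lemma measurable_capacity : Measurable (capacity c) := by
  unfold capacity; fun_prop

lemma continuousAt_capacity (hc : 0 ≤ c) {g : ℝ} (hg : 0 ≤ g) : ContinuousAt (capacity c) g :=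
  (by fun_prop : Continuous fun g => 1 + c * g).continuousAt.log (by positivity)

lemma capacity_strictMonoOn (hc : 0 < c) : StrictMonoOn (capacity c) (Ici 0) :=
  fun x hx _ _ hxy => Real.log_lt_log (by nlinarith [hx.out]) (by nlinarith)

lemma capacity_pos (hc : 0 < c) {g : ℝ} (hg : 0 < g) : 0 < capacity c g := by
  simpa using capacity_strictMonoOn hc (mem_Ici.2 le_rfl) hg.le hg

lemma capacity_add (hc : 0 ≤ c) {G t : ℝ} (hG : 0 ≤ G) (ht : 0 ≤ t) :
    capacity c (G + t) = capacity c G + Real.log (1 + c * t / (1 + c * G)) := by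
  have h : 0 < 1 + c * G := by positivity
  rw [capacity, capacity, ← Real.log_mul h.ne' (by positivity)]
  congr 1
  field_simp
  ring

lemma capacity_add_le (hc : 0 ≤ c) {G t : ℝ} (hG : 0 ≤ G) (ht : 0 ≤ t) :
    capacity c (G + t) ≤ capacity c G + capacity c t := by
  rw [capacity_add hc hG ht, add_le_add_iff_left, capacity]
  gcongr
  exact div_le_self (by positivity) (le_add_of_nonneg_right (by positivity))

lemma tendsto_capacity_atTop (hc : 0 < c) : Tendsto (capacity c) atTop atTop :=
  tendsto_log_atTop.comp (tendsto_atTop_add_const_left _ 1 (tendsto_id.const_mul_atTop hc))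

noncomputable def capacityRatio (c G t : ℝ) : ℝ := capacity c G / capacity c (G + t)

@[fun_prop] lemma measurable_capacityRatio {G : ℝ} : Measurable (capacityRatio c G) := by
  unfold capacityRatio; fun_prop

lemma capacityRatio_nonneg (hc : 0 < c) {G t : ℝ} (hG : 0 < G) (ht : 0 ≤ t) :
    0 ≤ capacityRatio c G t :=
  div_nonneg (capacity_pos hc hG).le (capacity_pos hc (by linarith)).le

lemma capacityRatio_le_one (hc : 0 < c) {G t : ℝ} (hG : 0 < G) (ht : 0 ≤ t) :
    capacityRatio c G t ≤ 1 :=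
  div_le_one_of_le₀ ((capacity_strictMonoOn hc).le_iff_le hG.le (mem_Ici.2 (by linarith)) |>.2
    (by linarith)) (capacity_pos hc (by linarith)).le

lemma capacityRatio_strictMonoOn (hc : 0 < c) {t : ℝ} (ht : 0 < t) :
    StrictMonoOn (fun G => capacityRatio c G t) (Ioi 0) := by
  intro G₁ (hG₁ : 0 < G₁) G₂ (hG₂ : 0 < G₂) hG
  -- `capacity c (G + t) = a + b` by `capacity_add`; `a / (a + b)` grows with `a`, shrinks with `b`
  have ha : capacity c G₁ < capacity c G₂ := capacity_strictMonoOn hc hG₁.le hG₂.le hG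
  have ha₁ : 0 < capacity c G₁ := capacity_pos hc hG₁
  have hb : Real.log (1 + c * t / (1 + c * G₂)) < Real.log (1 + c * t / (1 + c * G₁)) := by
    have : c * t / (1 + c * G₂) < c * t / (1 + c * G₁) :=
      div_lt_div_of_pos_left (by positivity) (by positivity) (by nlinarith)
    exact Real.log_lt_log (by positivity) (by linarith)
  have hb₂ : 0 < Real.log (1 + c * t / (1 + c * G₂)) :=
    Real.log_pos (lt_add_of_pos_right _ (by positivity))
  simp only [capacityRatio]
  rw [capacity_add hc.le hG₁.le ht.le, capacity_add hc.le hG₂.le ht.le,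
    div_lt_div_iff₀ (by linarith) (by linarith)]
  nlinarith [mul_lt_mul'' ha hb ha₁.le hb₂.le]

lemma tendsto_capacityRatio_nhdsGT_zero (hc : 0 < c) {t : ℝ} (ht : 0 < t) :
    Tendsto (fun G => capacityRatio c G t) (𝓝[>] 0) (𝓝 0) := by
  have hcont : ContinuousAt (fun G => capacityRatio c G t) 0 :=
    (continuousAt_capacity hc.le le_rfl).div
      ((continuousAt_capacity hc.le (by simpa using ht.le)).comp (by fun_prop))
      (by simpa using (capacity_pos hc ht).ne')
  simpa [capacityRatio] using hcont.tendsto.mono_left nhdsWithin_le_nhds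

lemma tendsto_capacityRatio_atTop (hc : 0 < c) {t : ℝ} (ht : 0 ≤ t) :
    Tendsto (fun G => capacityRatio c G t) atTop (𝓝 1) := by
  have hlower : Tendsto (fun G => 1 - capacity c t / capacity c (G + t)) atTop (𝓝 1) := by
    simpa using tendsto_const_nhds.sub (tendsto_const_nhds.div_atTop
      ((tendsto_capacity_atTop hc).comp (tendsto_atTop_add_const_right _ t tendsto_id)))
  refine tendsto_of_tendsto_of_tendsto_of_le_of_le' hlower tendsto_const_nhds ?_ ?_
  · filter_upwards [eventually_gt_atTop 0] with G hG
    have hpos : 0 < capacity c (G + t) := capacity_pos hc (by linarith)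
    rw [capacityRatio, sub_le_iff_le_add, ← add_div, le_div_iff₀ hpos, one_mul]
    exact capacity_add_le hc.le hG.le ht
  · filter_upwards [eventually_gt_atTop 0] with G hG using capacityRatio_le_one hc hG ht

noncomputable def normalizedTail (lam c G : ℝ) : ℝ :=
  ∫ t in Ioi 0, exp (-lam * t) * capacityRatio c G t

lemma norm_exp_mul_capacityRatio_le (hc : 0 < c) {G t : ℝ} (hG : 0 < G) (ht : 0 ≤ t) :
    ‖exp (-lam * t) * capacityRatio c G t‖ ≤ exp (-lam * t) := by
  rw [norm_of_nonneg (mul_nonneg (exp_pos _).le (capacityRatio_nonneg hc hG ht))]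
  exact mul_le_of_le_one_right (exp_pos _).le (capacityRatio_le_one hc hG ht)

lemma integrableOn_exp_mul_capacityRatio (hlam : 0 < lam) (hc : 0 < c) {G : ℝ} (hG : 0 < G) :
    IntegrableOn (fun t => exp (-lam * t) * capacityRatio c G t) (Ioi 0) := by
  refine (exp_neg_integrableOn_Ioi 0 hlam).mono' (by fun_prop) ?_
  filter_upwards [ae_restrict_mem measurableSet_Ioi] with t ht
  exact norm_exp_mul_capacityRatio_le hc hG (le_of_lt ht)

lemma normalizedTail_strictMonoOn (hlam : 0 < lam) (hc : 0 < c) :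
    StrictMonoOn (normalizedTail lam c) (Ioi 0) := fun G₁ hG₁ G₂ hG₂ hG =>
  setIntegral_lt_setIntegral_of_forall_lt measurableSet_Ioi (by simp)
    (integrableOn_exp_mul_capacityRatio hlam hc hG₁)
    (integrableOn_exp_mul_capacityRatio hlam hc hG₂)
    fun _ ht => mul_lt_mul_of_pos_left (capacityRatio_strictMonoOn hc ht hG₁ hG₂ hG) (exp_pos _)

lemma tendsto_normalizedTail {l : Filter ℝ} [l.IsCountablyGenerated] {ρ : ℝ} (hlam : 0 < lam)
    (hc : 0 < c) (hl : ∀ᶠ G in l, 0 < G)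
    (hρ : ∀ t > 0, Tendsto (fun G => capacityRatio c G t) l (𝓝 ρ)) :
    Tendsto (normalizedTail lam c) l (𝓝 (ρ / lam)) := by
  have hlim : ∫ t in Ioi 0, exp (-lam * t) * ρ = ρ / lam := by
    rw [integral_mul_const, integral_exp_mul_Ioi (neg_neg_of_pos hlam)]
    field_simp
    simp
  rw [← hlim]
  refine tendsto_integral_filter_of_dominated_convergence (fun t => exp (-lam * t))
    ?_ ?_ (exp_neg_integrableOn_Ioi 0 hlam) ?_
  · filter_upwards [hl] with G hG
    exact (integrableOn_exp_mul_capacityRatio hlam hc hG).aestronglyMeasurable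
  · filter_upwards [hl] with G hG
    filter_upwards [ae_restrict_mem measurableSet_Ioi] with t ht
    exact norm_exp_mul_capacityRatio_le hc hG (le_of_lt ht)
  · filter_upwards [ae_restrict_mem measurableSet_Ioi] with t ht
    exact (hρ t ht).const_mul _

noncomputable def tailIntegral (lam c G : ℝ) : ℝ :=
  ∫ g in Ioi G, exp (-lam * g) / capacity c g

lemma integrableOn_exp_div_capacity (hlam : 0 < lam) (hc : 0 < c) {G : ℝ} (hG : 0 < G) :
    IntegrableOn (fun g => exp (-lam * g) / capacity c g) (Ioi G) := by
  refine ((exp_neg_integrableOn_Ioi G hlam).div_const (capacity c G)).mono'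
    (by fun_prop : Measurable fun g => exp (-lam * g) / capacity c g).aestronglyMeasurable ?_
  filter_upwards [ae_restrict_mem measurableSet_Ioi] with g (hg : G < g)
  rw [norm_of_nonneg (div_nonneg (exp_pos _).le (capacity_pos hc (hG.trans hg)).le)]
  exact div_le_div_of_nonneg_left (exp_pos _).le (capacity_pos hc hG)
    ((capacity_strictMonoOn hc).le_iff_le hG.le (hG.trans hg).le |>.2 hg.le)

lemma hasDerivAt_tailIntegral (hlam : 0 < lam) (hc : 0 < c) {G : ℝ} (hG : 0 < G) :
    HasDerivAt (tailIntegral lam c) (-(exp (-lam * G) / capacity c G)) G := by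
  have hint := integrableOn_exp_div_capacity hlam hc (half_pos hG)
  have hcont : ContinuousAt (fun g => exp (-lam * g) / capacity c g) G :=
    (by fun_prop : Continuous fun g => exp (-lam * g)).continuousAt.div
      (continuousAt_capacity hc.le hG.le) (capacity_pos hc hG).ne'
  have hmeas : Measurable fun g => exp (-lam * g) / capacity c g := by fun_prop
  have hFTC := (intervalIntegral.integral_hasDerivAt_right
    ((intervalIntegrable_iff_integrableOn_Ioc_of_le (half_lt_self hG).le).2
      (hint.mono_set Ioc_subset_Ioi_self))
    hmeas.stronglyMeasurable.stronglyMeasurableAtFilter hcont).const_sub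
      (tailIntegral lam c (G / 2))
  refine hFTC.congr_of_eventuallyEq ?_
  filter_upwards [Ioi_mem_nhds (half_lt_self hG)] with x hx
  rw [tailIntegral, tailIntegral, ← intervalIntegral.integral_Ioi_sub_Ioi hint hx.out.le]
  ring

lemma exp_mul_capacity_mul_tailIntegral (G : ℝ) :
    exp (lam * G) * capacity c G * tailIntegral lam c G = normalizedTail lam c G := by
  rw [tailIntegral, normalizedTail, ← integral_const_mul,
    ← (measurePreserving_add_left volume G).setIntegral_preimage_emb
      (measurableEmbedding_addLeft G), preimage_const_add_Ioi, sub_self]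
  refine integral_congr_ae (ae_of_all _ fun t => ?_)
  simp only [capacityRatio]
  rw [show -lam * t = lam * G + -lam * (G + t) by ring, exp_add]
  ring

lemma hasDerivAt_exp_mul_tailIntegral (hlam : 0 < lam) (hc : 0 < c) {G : ℝ} (hG : 0 < G) :
    HasDerivAt (fun G => exp (2 * lam * G) * tailIntegral lam c G)
      (exp (lam * G) / capacity c G * (2 * lam * normalizedTail lam c G - 1)) G := by
  have hexp : HasDerivAt (fun G => exp (2 * lam * G)) (exp (2 * lam * G) * (2 * lam)) G := by
    simpa using ((hasDerivAt_id G).const_mul (2 * lam)).exp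
  refine (hexp.mul (hasDerivAt_tailIntegral hlam hc hG)).congr_deriv ?_
  have h2 : exp (2 * lam * G) = exp (lam * G) * exp (lam * G) := by rw [← exp_add]; ring_nf
  have hneg : exp (-lam * G) = (exp (lam * G))⁻¹ := by rw [← exp_neg]; ring_nf
  rw [← exp_mul_capacity_mul_tailIntegral, h2, hneg]
  field_simp [(capacity_pos hc hG).ne']
  ring

lemma exists_sign_change_two_mul_normalizedTail_sub_one (hlam : 0 < lam) (hc : 0 < c) :
    ∃ d, 0 < d ∧ (∀ G ∈ Ioo 0 d, 2 * lam * normalizedTail lam c G - 1 < 0) ∧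
      ∀ G ∈ Ioi d, 0 < 2 * lam * normalizedTail lam c G - 1 := by
  have hmono : StrictMonoOn (fun G => 2 * lam * normalizedTail lam c G - 1) (Ioi 0) :=
    fun G₁ h₁ G₂ h₂ h => sub_lt_sub_right (mul_lt_mul_of_pos_left
      (normalizedTail_strictMonoOn hlam hc h₁ h₂ h) (by positivity)) 1
  have hzero : Tendsto (fun G => 2 * lam * normalizedTail lam c G - 1) (𝓝[>] 0) (𝓝 (-1)) := by
    convert ((tendsto_normalizedTail (l := 𝓝[>] 0) hlam hc self_mem_nhdsWithin
      fun t ht => tendsto_capacityRatio_nhdsGT_zero hc ht).const_mul (2 * lam)).sub_const 1 using 2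
    simp
  have htop : Tendsto (fun G => 2 * lam * normalizedTail lam c G - 1) atTop (𝓝 1) := by
    convert ((tendsto_normalizedTail hlam hc (eventually_gt_atTop 0)
      fun t ht => tendsto_capacityRatio_atTop hc ht.le).const_mul (2 * lam)).sub_const 1 using 2
    field_simp
    norm_num
  obtain ⟨a, ha, ha'⟩ :=
    ((hzero.eventually (gt_mem_nhds (by norm_num : (-1 : ℝ) < 0))).and self_mem_nhdsWithin).exists
  obtain ⟨b, hb, hb'⟩ :=
    ((htop.eventually (lt_mem_nhds one_pos)).and (eventually_gt_atTop 0)).exists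
  exact hmono.exists_neg_pos_Ioi ha' hb' ha hb

end RateThreshold

open RateThreshold in
/-- Unimodality of `E{T_n}·E{P_n}` in the rate threshold (Lemma 2):
`Φ(G) = e^{2λG} · ∫_G^∞ e^{−λg}/ln(1+c·g) dg` is strictly decreasing on `(0, G‡]`
and strictly increasing on `[G‡, ∞)` for some `G‡ > 0`. -/
theorem unimodality_Phi (lam c : ℝ) (hlam : 0 < lam) (hc : 0 < c) :
    ∃ Gd : ℝ, 0 < Gd ∧
      StrictAntiOn
        (fun G : ℝ => Real.exp (2 * lam * G) *
          ∫ g in Set.Ioi G, Real.exp (-lam * g) / Real.log (1 + c * g))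
        (Set.Ioc 0 Gd) ∧
      StrictMonoOn
        (fun G : ℝ => Real.exp (2 * lam * G) *
          ∫ g in Set.Ioi G, Real.exp (-lam * g) / Real.log (1 + c * g))
        (Set.Ici Gd) := by
  obtain ⟨d, hd, hneg, hpos⟩ := exists_sign_change_two_mul_normalizedTail_sub_one hlam hc
  refine ⟨d, hd, strictAntiOn_Ioc_and_strictMonoOn_Ici_of_hasDerivAt hd
    (fun G hG => hasDerivAt_exp_mul_tailIntegral hlam hc hG) (fun G hG => ?_) fun G hG => ?_⟩
  · exact mul_neg_of_pos_of_neg (div_pos (exp_pos _) (capacity_pos hc hG.1)) (hneg G hG)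
  · exact mul_pos (div_pos (exp_pos _) (capacity_pos hc (hd.trans hG))) (hpos G hG)
end

section
/- Monotonicity of the expected offloading time E{T_n} (part of Lemma 1). The function G ↦ e^{λG} · ∫_G^∞ (D/(B·ln(1 + c·g))) · λ e^{−λg} dg is antitone (monotonically nonincreasing) on (0, ∞). -/
open MeasureTheory Set

private lemma shift_eq (lam c D B G : ℝ) :
    Real.exp (lam * G) *
        ∫ g in Set.Ioi G, (D / (B * Real.log (1 + c * g))) * (lam * Real.exp (-lam * g))
      = ∫ u in Set.Ioi (0:ℝ),
          (D / (B * Real.log (1 + c * (u + G)))) * (lam * Real.exp (-lam * u)) := by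
  have hmp : MeasurePreserving (fun x : ℝ => x + G) volume volume :=
    measurePreserving_add_right volume G
  have hemb : MeasurableEmbedding (fun x : ℝ => x + G) :=
    (measurableEmbedding_addRight G)
  have hpre : (fun x : ℝ => x + G) ⁻¹' Set.Ioi G = Set.Ioi 0 := by
    ext x; simp [lt_add_iff_pos_left]
  have h1 : (∫ g in Set.Ioi G,
        (D / (B * Real.log (1 + c * g))) * (lam * Real.exp (-lam * g)))
      = ∫ u in Set.Ioi (0:ℝ),
          (D / (B * Real.log (1 + c * (u + G)))) * (lam * Real.exp (-lam * (u + G))) := by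
    rw [← hmp.setIntegral_preimage_emb hemb
      (fun g => (D / (B * Real.log (1 + c * g))) * (lam * Real.exp (-lam * g))) (Set.Ioi G),
      hpre]
  rw [h1, ← integral_const_mul]
  congr 1
  ext u
  have he : Real.exp (lam * G) * Real.exp (-lam * (u + G)) = Real.exp (-lam * u) := by
    rw [← Real.exp_add]; congr 1; ring
  calc Real.exp (lam * G) *
        (D / (B * Real.log (1 + c * (u + G))) * (lam * Real.exp (-lam * (u + G))))
      = D / (B * Real.log (1 + c * (u + G))) *
        (lam * (Real.exp (lam * G) * Real.exp (-lam * (u + G)))) := by ring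
    _ = D / (B * Real.log (1 + c * (u + G))) * (lam * Real.exp (-lam * u)) := by rw [he]

/-- Monotonicity of the expected offloading time `E{T_n}` (part of Lemma 1):
`G ↦ e^{λG} · ∫_G^∞ (D/(B·ln(1+c·g))) · λ e^{−λg} dg` is antitone on `(0, ∞)`. -/
theorem expected_offloading_time_antitone (lam c D B : ℝ)
    (hlam : 0 < lam) (hc : 0 < c) (hD : 0 < D) (hB : 0 < B) :
    AntitoneOn
      (fun G : ℝ => Real.exp (lam * G) *
        ∫ g in Set.Ioi G, (D / (B * Real.log (1 + c * g))) * (lam * Real.exp (-lam * g)))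
      (Set.Ioi 0) := by
  intro G₁ hG₁ G₂ hG₂ h12
  simp only
  rw [shift_eq, shift_eq]
  -- integrability of the shifted integrand for any G > 0
  have key : ∀ G : ℝ, 0 < G → IntegrableOn
      (fun u => (D / (B * Real.log (1 + c * (u + G)))) * (lam * Real.exp (-lam * u)))
      (Set.Ioi 0) := by
    intro G hG
    have hlog : 0 < Real.log (1 + c * G) := by
      apply Real.log_pos; nlinarith
    have hbound : IntegrableOn
        (fun u : ℝ => (D / (B * Real.log (1 + c * G))) * (lam * Real.exp (-lam * u)))
        (Set.Ioi 0) := by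
      apply Integrable.const_mul
      exact (exp_neg_integrableOn_Ioi 0 hlam).const_mul lam
    apply Integrable.mono hbound
    · apply AEStronglyMeasurable.mul
      · apply Measurable.aestronglyMeasurable
        apply Measurable.const_div
        exact measurable_const.mul (Real.measurable_log.comp
          (((measurable_id.add_const G).const_mul c).const_add 1))
      · exact (measurable_const.mul ((measurable_id.const_mul (-lam)).exp)).aestronglyMeasurable
    · filter_upwards [ae_restrict_mem measurableSet_Ioi] with u hu
      have hu : (0:ℝ) < u := hu
      have hlog2 : Real.log (1 + c * G) ≤ Real.log (1 + c * (u + G)) := by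
        apply Real.log_le_log (by nlinarith); nlinarith
      have hlog2' : 0 < Real.log (1 + c * (u + G)) := lt_of_lt_of_le hlog hlog2
      have hexp : 0 < lam * Real.exp (-lam * u) :=
        mul_pos hlam (Real.exp_pos _)
      rw [Real.norm_eq_abs, Real.norm_eq_abs, abs_of_nonneg, abs_of_nonneg]
      · apply mul_le_mul_of_nonneg_right _ hexp.le
        apply div_le_div_of_nonneg_left hD.le (by positivity)
        exact mul_le_mul_of_nonneg_left hlog2 hB.le
      · positivity
      · positivity
  have hG₁' : (0:ℝ) < G₁ := hG₁
  have hG₂' : (0:ℝ) < G₂ := hG₂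
  apply setIntegral_mono_on (key G₂ hG₂') (key G₁ hG₁') measurableSet_Ioi
  intro u hu
  have hu : (0:ℝ) < u := hu
  apply mul_le_mul_of_nonneg_right _ (mul_pos hlam (Real.exp_pos _)).le
  have h1 : 0 < Real.log (1 + c * (u + G₁)) := by
    apply Real.log_pos; nlinarith
  apply div_le_div_of_nonneg_left hD.le (by positivity)
  apply mul_le_mul_of_nonneg_left _ hB.le
  apply Real.log_le_log (by nlinarith)
  nlinarith
end

section
/- Monotonicity of the second moment of the offloading time E{T_n²} (part of Lemma 1). The function G ↦ e^{λG} · ∫_G^∞ (D/(B·ln(1 + c·g)))² · λ e^{−λg} dg is antitone (monotonically nonincreasing) on (0, ∞). -/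
/-!
Conditioned on `g > G`, an exponential variable `g` is distributed as `G + x` with `x` again
exponential (memorylessness), so `e^{λG} ∫_G^∞ f(g) λ e^{-λg} dg = ∫_0^∞ f(x + G) λ e^{-λx} dx`.
For `f(g) = (D / (B ln (1 + c g)))²`, which decreases in `g`, the right-hand side is an integral
against a fixed measure of an integrand that decreases pointwise in `G`.
-/

open MeasureTheory Set

theorem setIntegral_Ioi_comp_add_right {E : Type*} [NormedAddCommGroup E] [NormedSpace ℝ E]
    (h : ℝ → E) (a G : ℝ) :
    ∫ x in Ioi a, h (x + G) = ∫ y in Ioi (a + G), h y := by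
  have hpre : (fun x : ℝ => x + G) ⁻¹' Ioi (a + G) = Ioi a := by
    rw [preimage_add_const_Ioi, add_sub_cancel_right]
  rw [← (measurePreserving_add_right volume G).setIntegral_preimage_emb
    (measurableEmbedding_addRight G) h, hpre]

theorem exp_mul_setIntegral_Ioi_mul_exp_neg (f : ℝ → ℝ) (lam G : ℝ) :
    Real.exp (lam * G) * ∫ g in Ioi G, f g * (lam * Real.exp (-lam * g)) =
      ∫ x in Ioi 0, f (x + G) * (lam * Real.exp (-lam * x)) := by
  have hshift : ∀ x, Real.exp (lam * G) * (f (x + G) * (lam * Real.exp (-lam * (x + G)))) =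
      f (x + G) * (lam * Real.exp (-lam * x)) := fun x => by
    rw [mul_left_comm, mul_left_comm _ lam, ← Real.exp_add]
    ring_nf
  simp_rw [← hshift, integral_const_mul, setIntegral_Ioi_comp_add_right
    (fun g => f g * (lam * Real.exp (-lam * g))), zero_add]

theorem integrableOn_Ioi_mul_exp_neg_of_norm_le {f : ℝ → ℝ} {lam a C : ℝ} (hlam : 0 < lam)
    (hf : AEStronglyMeasurable f (volume.restrict (Ioi a))) (hC : ∀ x ∈ Ioi a, ‖f x‖ ≤ C) :
    IntegrableOn (fun x => f x * (lam * Real.exp (-lam * x))) (Ioi a) := by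
  refine Integrable.bdd_mul ?_ hf ((ae_restrict_iff' measurableSet_Ioi).2 (.of_forall hC))
  simpa using (exp_neg_integrableOn_Ioi a hlam).const_mul lam

theorem antitoneOn_exp_mul_setIntegral_Ioi_mul_exp_neg {f : ℝ → ℝ} {lam a : ℝ} (hlam : 0 < lam)
    (hf : AntitoneOn f (Ioi a)) (hf₀ : ∀ x ∈ Ioi a, 0 ≤ f x) :
    AntitoneOn (fun G => Real.exp (lam * G) * ∫ g in Ioi G, f g * (lam * Real.exp (-lam * g)))
      (Ioi a) := by
  have hmem : ∀ G ∈ Ioi a, ∀ x ∈ Ioi (0 : ℝ), x + G ∈ Ioi a :=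
    fun G (hG : a < G) x (hx : 0 < x) => show a < x + G by linarith
  have hint : ∀ G ∈ Ioi a, IntegrableOn (fun x => f (x + G) * (lam * Real.exp (-lam * x)))
      (Ioi 0) := by
    intro G hG
    have hshift_anti : AntitoneOn (fun x => f (x + G)) (Ioi 0) := fun x hx y hy hxy =>
      hf (hmem G hG x hx) (hmem G hG y hy) (by linarith)
    refine integrableOn_Ioi_mul_exp_neg_of_norm_le (C := f G) hlam
      (aemeasurable_restrict_of_antitoneOn measurableSet_Ioi hshift_anti).aestronglyMeasurable
      fun x (hx : 0 < x) => ?_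
    rw [Real.norm_of_nonneg (hf₀ _ (hmem G hG x hx))]
    exact hf hG (hmem G hG x hx) (by linarith)
  intro G₁ hG₁ G₂ hG₂ hG
  simp only [exp_mul_setIntegral_Ioi_mul_exp_neg]
  refine setIntegral_mono_on (hint G₂ hG₂) (hint G₁ hG₁) measurableSet_Ioi fun x hx => ?_
  gcongr
  exact hf (hmem G₁ hG₁ x hx) (hmem G₂ hG₂ x hx) (by linarith)

theorem antitoneOn_sq_div_mul_log_one_add_mul (D B : ℝ) {c : ℝ} (hc : 0 < c) :
    AntitoneOn (fun g => (D / (B * Real.log (1 + c * g))) ^ 2) (Ioi 0) := by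
  intro a (ha : 0 < a) b _ hab
  have hlog_pos : 0 < Real.log (1 + c * a) := Real.log_pos (by nlinarith)
  have hlog_le : Real.log (1 + c * a) ≤ Real.log (1 + c * b) :=
    Real.log_le_log (by nlinarith) (by nlinarith)
  simp only [div_mul_eq_div_div _ B, div_pow]
  exact div_le_div_of_nonneg_left (by positivity) (by positivity) (by gcongr)

theorem offloading_time_second_moment_antitone_general (lam c D B : ℝ)
    (hlam : 0 < lam) (hc : 0 < c) :
    AntitoneOn
      (fun G : ℝ => Real.exp (lam * G) *
        ∫ g in Set.Ioi G, (D / (B * Real.log (1 + c * g)))^2 * (lam * Real.exp (-lam * g)))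
      (Set.Ioi 0) :=
  antitoneOn_exp_mul_setIntegral_Ioi_mul_exp_neg hlam
    (antitoneOn_sq_div_mul_log_one_add_mul D B hc) fun _ _ => sq_nonneg _

/-- Monotonicity of the second moment of the offloading time `E{T_n²}` (part of Lemma 1):
`G ↦ e^{λG} · ∫_G^∞ (D/(B·ln(1+c·g)))² · λ e^{−λg} dg` is antitone on `(0, ∞)`. -/
theorem offloading_time_second_moment_antitone (lam c D B : ℝ)
    (hlam : 0 < lam) (hc : 0 < c) (hD : 0 < D) (hB : 0 < B) :
    AntitoneOn
      (fun G : ℝ => Real.exp (lam * G) *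
        ∫ g in Set.Ioi G, (D / (B * Real.log (1 + c * g)))^2 * (lam * Real.exp (-lam * g)))
      (Set.Ioi 0) :=
  offloading_time_second_moment_antitone_general lam c D B hlam hc
end

section
/- Truncated conditional mean of a decreasing function is decreasing (key step in the proof of Lemma 1). Let λ > 0 and let h : ℝ → ℝ be antitone on (0, ∞) with g ↦ h(g)·e^{−λg} integrable on (0, ∞). Then the map G ↦ (∫_G^∞ h(g)·e^{−λg} dg) / (∫_G^∞ e^{−λg} dg) is antitone on (0, ∞). -/
/-! Split `(a, ∞)` at `b > a`. On `(a, b]` the antitone `h` is at least `h b`, on `(b, ∞)` at most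
`h b`, so the `w`-weighted mean of `h` over `(a, ∞)` is a mediant of a mean `≥ h b` and the mean
over `(b, ∞)`, which is `≤ h b`; hence it dominates the latter. -/

open MeasureTheory Set

lemma div_le_add_div_add_of_mul_le {n₁ n₂ d₁ d₂ c : ℝ} (hd₁ : 0 < d₁) (hd₂ : 0 < d₂)
    (h₁ : c * d₁ ≤ n₁) (h₂ : n₂ ≤ c * d₂) : n₂ / d₂ ≤ (n₁ + n₂) / (d₁ + d₂) := by
  rw [div_le_div_iff₀ hd₂ (add_pos hd₁ hd₂)]
  nlinarith [mul_le_mul_of_nonneg_right h₂ hd₁.le, mul_le_mul_of_nonneg_right h₁ hd₂.le]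

lemma setIntegral_pos_of_pos_on {X : Type*} [MeasurableSpace X] {μ : Measure X} {s : Set X}
    {w : X → ℝ} (hs : MeasurableSet s) (hμs : 0 < μ s) (hw : ∀ x ∈ s, 0 < w x)
    (hwi : IntegrableOn w s μ) : 0 < ∫ x in s, w x ∂μ := by
  have hsupp : Function.support w ∩ s = s := inter_eq_right.mpr fun x hx => (hw x hx).ne'
  rwa [setIntegral_pos_iff_support_of_nonneg_ae
    (ae_restrict_of_forall_mem hs fun x hx => (hw x hx).le) hwi, hsupp]

theorem antitoneOn_setIntegral_Ioi_mul_div_setIntegral_Ioi {w h : ℝ → ℝ} {t : ℝ}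
    (hw : ∀ x ∈ Ioi t, 0 < w x) (hwi : IntegrableOn w (Ioi t))
    (hh : AntitoneOn h (Ioi t)) (hhw : IntegrableOn (fun x => h x * w x) (Ioi t)) :
    AntitoneOn (fun G => (∫ x in Ioi G, h x * w x) / ∫ x in Ioi G, w x) (Ioi t) := by
  intro a ha b hb hab
  rcases hab.eq_or_lt with rfl | hab
  · exact le_rfl
  have hsub_a : Ioi a ⊆ Ioi t := Ioi_subset_Ioi (le_of_lt ha)
  have hsub_b : Ioi b ⊆ Ioi t := Ioi_subset_Ioi (le_of_lt hb)
  have hsub_ab : Ioc a b ⊆ Ioi t := Ioc_subset_Ioi_self.trans hsub_a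
  have hD₁ : 0 < ∫ x in Ioc a b, w x :=
    setIntegral_pos_of_pos_on measurableSet_Ioc (by simpa using hab)
      (fun x hx => hw x (hsub_ab hx)) (hwi.mono_set hsub_ab)
  have hD₂ : 0 < ∫ x in Ioi b, w x :=
    setIntegral_pos_of_pos_on measurableSet_Ioi (by simp)
      (fun x hx => hw x (hsub_b hx)) (hwi.mono_set hsub_b)
  have hN₁ : h b * ∫ x in Ioc a b, w x ≤ ∫ x in Ioc a b, h x * w x := by
    rw [← integral_const_mul]
    refine setIntegral_mono_on ((hwi.mono_set hsub_ab).const_mul _) (hhw.mono_set hsub_ab)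
      measurableSet_Ioc fun x hx => ?_
    exact mul_le_mul_of_nonneg_right (hh (hsub_ab hx) hb hx.2) (hw x (hsub_ab hx)).le
  have hN₂ : ∫ x in Ioi b, h x * w x ≤ h b * ∫ x in Ioi b, w x := by
    rw [← integral_const_mul]
    refine setIntegral_mono_on (hhw.mono_set hsub_b) ((hwi.mono_set hsub_b).const_mul _)
      measurableSet_Ioi fun x hx => ?_
    exact mul_le_mul_of_nonneg_right (hh hb (hsub_b hx) (le_of_lt hx)) (hw x (hsub_b hx)).le
  dsimp only
  rw [← intervalIntegral.integral_interval_add_Ioi (hhw.mono_set hsub_a) (hhw.mono_set hsub_b),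
    ← intervalIntegral.integral_interval_add_Ioi (hwi.mono_set hsub_a) (hwi.mono_set hsub_b),
    intervalIntegral.integral_of_le hab.le, intervalIntegral.integral_of_le hab.le]
  exact div_le_add_div_add_of_mul_le hD₁ hD₂ hN₁ hN₂

/-- Truncated conditional mean of a decreasing function is decreasing (key step of Lemma 1):
if `h` is antitone on `(0, ∞)` and `g ↦ h(g)·e^{−λg}` is integrable on `(0, ∞)`, then
`G ↦ (∫_G^∞ h(g)·e^{−λg} dg) / (∫_G^∞ e^{−λg} dg)` is antitone on `(0, ∞)`. -/
theorem truncated_conditional_mean_antitone (lam : ℝ) (hlam : 0 < lam)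
    (h : ℝ → ℝ) (hmono : AntitoneOn h (Set.Ioi 0))
    (hint : MeasureTheory.IntegrableOn (fun g => h g * Real.exp (-lam * g)) (Set.Ioi 0)) :
    AntitoneOn
      (fun G : ℝ => (∫ g in Set.Ioi G, h g * Real.exp (-lam * g)) /
        (∫ g in Set.Ioi G, Real.exp (-lam * g)))
      (Set.Ioi 0) :=
  antitoneOn_setIntegral_Ioi_mul_div_setIntegral_Ioi (fun _ _ => Real.exp_pos _)
    (exp_neg_integrableOn_Ioi 0 hlam) hmono hint
end

section
/- Monotonicity pattern of Ξ₁ (step in the proof of Lemma 2). Let λ > 0 and c > 0, define Ξ₁(G) := 2λ · ∫_G^∞ e^{−λg}/ln(1 + c·g) dg − e^{−λG}/ln(1 + c·G) for G > 0, and let x† be the unique zero in (0, ∞) of x ↦ c − λ·(1 + c·x)·ln(1 + c·x). Then Ξ₁ is strictly increasing on (0, x†] and strictly decreasing on [x†, ∞). -/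
/-!
Writing `φ(g) = e^{-λg} / log (1 + c g)`, we have `Ξ₁ = 2λ ∫_G^∞ φ - φ(G)`, hence
`Ξ₁'(G) = -2λ φ(G) - φ'(G) = e^{-λG} Ξ₂(G) / ((1 + cG) log² (1 + cG))`,
whose sign is that of `Ξ₂(G) = c - λ (1 + cG) log (1 + cG)`.
Since `t ↦ t log t` is strictly increasing on `[1, ∞)`, `Ξ₂` is strictly decreasing
on `[0, ∞)`, so it is positive before its zero `x†` and negative after.
-/

open MeasureTheory Set Filter Topology

theorem hasDerivAt_integral_Ioi {E : Type*} [NormedAddCommGroup E] [NormedSpace ℝ E]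
    [CompleteSpace E] {f : ℝ → E} {a x : ℝ} (hf : IntegrableOn f (Ioi a)) (hax : a < x)
    (hmeas : StronglyMeasurableAtFilter f (𝓝 x)) (hcont : ContinuousAt f x) :
    HasDerivAt (fun G => ∫ g in Ioi G, f g) (-f x) x := by
  have hint : IntervalIntegrable f volume a x :=
    (intervalIntegrable_iff_integrableOn_Ioc_of_le hax.le).2 (hf.mono_set Ioc_subset_Ioi_self)
  have hsplit : (fun G => ∫ g in Ioi G, f g) =ᶠ[𝓝 x]
      fun G => (∫ g in Ioi a, f g) - ∫ g in a..G, f g := by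
    filter_upwards [Ioi_mem_nhds hax] with G hG
    rw [← intervalIntegral.integral_Ioi_sub_Ioi hf (le_of_lt hG), sub_sub_cancel]
  exact ((intervalIntegral.integral_hasDerivAt_right hint hmeas hcont).const_sub _
    ).congr_of_eventuallyEq hsplit

namespace Xi

variable {lam c : ℝ}

noncomputable def φ (lam c g : ℝ) : ℝ := Real.exp (-lam * g) / Real.log (1 + c * g)

noncomputable def Ξ₁ (lam c G : ℝ) : ℝ := 2 * lam * (∫ g in Ioi G, φ lam c g) - φ lam c G

noncomputable def Ξ₂ (lam c x : ℝ) : ℝ := c - lam * (1 + c * x) * Real.log (1 + c * x)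

lemma log_one_add_mul_pos (hc : 0 < c) {x : ℝ} (hx : 0 < x) : 0 < Real.log (1 + c * x) :=
  Real.log_pos (by nlinarith)

lemma continuousOn_φ (hc : 0 < c) : ContinuousOn (φ lam c) (Ioi 0) := by
  intro x hx
  refine ContinuousAt.continuousWithinAt (ContinuousAt.div (by fun_prop) ?_
    (log_one_add_mul_pos hc hx).ne')
  exact (Real.continuousAt_log (by nlinarith [mem_Ioi.1 hx])).comp (by fun_prop)

lemma integrableOn_φ_Ioi (hlam : 0 < lam) (hc : 0 < c) {a : ℝ} (ha : 0 < a) :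
    IntegrableOn (φ lam c) (Ioi a) := by
  have hLa : 0 < Real.log (1 + c * a) := log_one_add_mul_pos hc ha
  refine Integrable.mono' ((exp_neg_integrableOn_Ioi a hlam).div_const (Real.log (1 + c * a)))
    (((continuousOn_φ hc).mono (Ioi_subset_Ioi ha.le)).aestronglyMeasurable measurableSet_Ioi) ?_
  rw [ae_restrict_iff' measurableSet_Ioi]
  refine Eventually.of_forall fun x (hx : a < x) => ?_
  have hLx : Real.log (1 + c * a) ≤ Real.log (1 + c * x) :=
    Real.log_le_log (by nlinarith) (by nlinarith)
  rw [Real.norm_eq_abs, φ, abs_div, abs_of_pos (Real.exp_pos _), abs_of_pos (hLa.trans_le hLx)]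
  gcongr

lemma hasDerivAt_Ξ₁ (hlam : 0 < lam) (hc : 0 < c) {x : ℝ} (hx : 0 < x) :
    HasDerivAt (Ξ₁ lam c)
      (Real.exp (-lam * x) * Ξ₂ lam c x / ((1 + c * x) * Real.log (1 + c * x) ^ 2)) x := by
  have hu : 0 < 1 + c * x := by nlinarith
  have hL := log_one_add_mul_pos hc hx
  have hφ_cont := continuousOn_φ (lam := lam) hc
  have hint : HasDerivAt (fun G => ∫ g in Ioi G, φ lam c g) (-φ lam c x) x :=
    hasDerivAt_integral_Ioi (integrableOn_φ_Ioi hlam hc (half_pos hx)) (half_lt_self hx)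
      (hφ_cont.stronglyMeasurableAtFilter isOpen_Ioi x hx)
      (hφ_cont.continuousAt (Ioi_mem_nhds hx))
  have hexp : HasDerivAt (fun g => Real.exp (-lam * g)) (Real.exp (-lam * x) * (-lam)) x := by
    simpa using ((hasDerivAt_id x).const_mul (-lam)).exp
  have hlog : HasDerivAt (fun g => Real.log (1 + c * g)) (c / (1 + c * x)) x := by
    simpa using (((hasDerivAt_id x).const_mul c).const_add 1).log hu.ne'
  refine ((hint.const_mul (2 * lam)).sub (hexp.div hlog hL.ne')).congr_deriv ?_
  simp only [φ, Ξ₂]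
  field_simp
  ring

lemma Ξ₂_strictAntiOn (hlam : 0 < lam) (hc : 0 < c) : StrictAntiOn (Ξ₂ lam c) (Ici 0) := by
  intro x (hx : 0 ≤ x) y (hy : 0 ≤ y) hxy
  have hexp : Real.exp (-1) ≤ 1 := Real.exp_le_one_iff.2 (by norm_num)
  have hmono := Real.mul_log_strictMonoOn (a := 1 + c * x) (b := 1 + c * y)
    (by simp only [mem_Ici]; nlinarith) (by simp only [mem_Ici]; nlinarith) (by gcongr)
  have := mul_lt_mul_of_pos_left hmono hlam
  simp only [Ξ₂, mul_assoc] at this ⊢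
  linarith

end Xi

open Xi in
theorem Xi1_monotonicity_pattern_general (lam c : ℝ) (hlam : 0 < lam) (hc : 0 < c)
    (xd : ℝ) (hxd : 0 < xd)
    (hzero : c - lam * (1 + c * xd) * Real.log (1 + c * xd) = 0) :
    StrictMonoOn
      (fun G : ℝ => 2 * lam * (∫ g in Set.Ioi G, Real.exp (-lam * g) / Real.log (1 + c * g)) -
        Real.exp (-lam * G) / Real.log (1 + c * G))
      (Set.Ioc 0 xd) ∧
    StrictAntiOn
      (fun G : ℝ => 2 * lam * (∫ g in Set.Ioi G, Real.exp (-lam * g) / Real.log (1 + c * g)) -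
        Real.exp (-lam * G) / Real.log (1 + c * G))
      (Set.Ici xd) := by
  change StrictMonoOn (Ξ₁ lam c) _ ∧ StrictAntiOn (Ξ₁ lam c) _
  change Ξ₂ lam c xd = 0 at hzero
  have hderiv := fun x (hx : 0 < x) => hasDerivAt_Ξ₁ hlam hc hx
  have hcont : ContinuousOn (Ξ₁ lam c) (Ioi 0) := fun x hx =>
    (hderiv x hx).continuousAt.continuousWithinAt
  have hden : ∀ x, 0 < x → 0 < (1 + c * x) * Real.log (1 + c * x) ^ 2 := fun x hx =>
    mul_pos (by nlinarith) (pow_pos (log_one_add_mul_pos hc hx) 2)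
  constructor
  · refine strictMonoOn_of_deriv_pos (convex_Ioc 0 xd) (hcont.mono Ioc_subset_Ioi_self) ?_
    rw [interior_Ioc]
    rintro x ⟨hx, hxxd⟩
    have hΞ₂ := Ξ₂_strictAntiOn hlam hc (mem_Ici.2 hx.le) (mem_Ici.2 hxd.le) hxxd
    rw [(hderiv x hx).deriv]
    exact div_pos (mul_pos (Real.exp_pos _) (hzero ▸ hΞ₂)) (hden x hx)
  · refine strictAntiOn_of_deriv_neg (convex_Ici xd) (hcont.mono (Ici_subset_Ioi.2 hxd)) ?_
    rw [interior_Ici]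
    rintro x (hxxd : xd < x)
    have hx := hxd.trans hxxd
    have hΞ₂ := Ξ₂_strictAntiOn hlam hc (mem_Ici.2 hxd.le) (mem_Ici.2 hx.le) hxxd
    rw [(hderiv x hx).deriv]
    exact div_neg_of_neg_of_pos (mul_neg_of_pos_of_neg (Real.exp_pos _) (hzero ▸ hΞ₂))
      (hden x hx)

/-- Monotonicity pattern of `Ξ₁` (step in the proof of Lemma 2): with
`Ξ₁(G) = 2λ·∫_G^∞ e^{−λg}/ln(1+c·g) dg − e^{−λG}/ln(1+c·G)` and `x†` the unique
zero in `(0, ∞)` of `x ↦ c − λ·(1+c·x)·ln(1+c·x)`, `Ξ₁` is strictly increasing on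
`(0, x†]` and strictly decreasing on `[x†, ∞)`. -/
theorem Xi1_monotonicity_pattern (lam c : ℝ) (hlam : 0 < lam) (hc : 0 < c)
    (xd : ℝ) (hxd : 0 < xd)
    (hzero : c - lam * (1 + c * xd) * Real.log (1 + c * xd) = 0)
    (huniq : ∀ y : ℝ, 0 < y → c - lam * (1 + c * y) * Real.log (1 + c * y) = 0 → y = xd) :
    StrictMonoOn
      (fun G : ℝ => 2 * lam * (∫ g in Set.Ioi G, Real.exp (-lam * g) / Real.log (1 + c * g)) -
        Real.exp (-lam * G) / Real.log (1 + c * G))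
      (Set.Ioc 0 xd) ∧
    StrictAntiOn
      (fun G : ℝ => 2 * lam * (∫ g in Set.Ioi G, Real.exp (-lam * g) / Real.log (1 + c * g)) -
        Real.exp (-lam * G) / Real.log (1 + c * G))
      (Set.Ici xd) :=
  Xi1_monotonicity_pattern_general lam c hlam hc xd hxd hzero
end

section
/- Behavior of Ξ₁ near zero (step in the proof of Lemma 2). Let λ > 0 and c > 0 and define Ξ₁(G) := 2λ · ∫_G^∞ e^{−λg}/ln(1 + c·g) dg − e^{−λG}/ln(1 + c·G) for G > 0. Then Ξ₁(G) → −∞ as G → 0⁺. -/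
/-!
Since `x / (1 + x) ≤ log (1 + x)`, the integrand is at most `e^{-λg} ((cg)⁻¹ + 1)`, so on
`(G, 1]` it integrates to at most `c⁻¹ log G⁻¹ + 1`, while the tail over `(1, ∞)` is a constant.
With `log (1 + cG) ≤ cG` for the subtracted term, `Ξ₁(G) ≤ (2λ/c) log G⁻¹ + K - e^{-λ}/(cG)`
on `(0, 1]` for a constant `K`, and the linear term in `G⁻¹` beats the logarithm.
-/

open MeasureTheory Set Filter Real Topology

lemma Real.inv_log_one_add_le {x : ℝ} (hx : 0 < x) : (log (1 + x))⁻¹ ≤ x⁻¹ + 1 := by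
  have hlog : x / (1 + x) ≤ log (1 + x) :=
    calc x / (1 + x) = 1 - (1 + x)⁻¹ := by field_simp; ring
      _ ≤ log (1 + x) := one_sub_inv_le_log_of_pos (by positivity)
  calc (log (1 + x))⁻¹ ≤ (x / (1 + x))⁻¹ := inv_anti₀ (by positivity) hlog
    _ = x⁻¹ + 1 := by field_simp

lemma tendsto_mul_log_add_sub_mul_atTop_atBot (a K : ℝ) {b : ℝ} (hb : 0 < b) :
    Tendsto (fun t => a * log t + K - b * t) atTop atBot := by
  have hlog : Tendsto (fun t => log t / t) atTop (𝓝 0) := by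
    simpa using tendsto_pow_log_div_mul_add_atTop 1 0 1 one_ne_zero
  have hfactor : Tendsto (fun t => a * (log t / t) + K * t⁻¹ - b) atTop (𝓝 (-b)) := by
    simpa using ((hlog.const_mul a).add (tendsto_inv_atTop_zero.const_mul K)).sub_const b
  refine (tendsto_id.atTop_mul_neg (neg_neg_of_pos hb) hfactor).congr' ?_
  filter_upwards [eventually_gt_atTop 0] with t ht
  simp only [id]
  field_simp

section

variable {lam c : ℝ}

lemma integrableOn_exp_neg_mul_div_log_Ioi (hlam : 0 < lam) (hc : 0 < c) {G : ℝ} (hG : 0 < G) :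
    IntegrableOn (fun g => exp (-lam * g) / log (1 + c * g)) (Ioi G) := by
  have hlog_pos : ∀ g ∈ Ioi G, 0 < log (1 + c * g) := fun g (hg : G < g) =>
    log_pos (lt_add_of_pos_right 1 (mul_pos hc (hG.trans hg)))
  refine Integrable.mono' ((exp_neg_integrableOn_Ioi G hlam).div_const (log (1 + c * G))) ?_ ?_
  · refine (ContinuousOn.div (by fun_prop) (ContinuousOn.log (by fun_prop) fun g hg => ?_)
      fun g hg => (hlog_pos g hg).ne').aestronglyMeasurable measurableSet_Ioi
    exact fun h => (hlog_pos g hg).ne' (by rw [h, log_zero])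
  · filter_upwards [ae_restrict_mem measurableSet_Ioi] with g (hg : G < g)
    rw [norm_of_nonneg (div_nonneg (exp_pos _).le (hlog_pos g hg).le)]
    gcongr
    exact log_pos (lt_add_of_pos_right 1 (mul_pos hc hG))

lemma setIntegral_Ioc_exp_neg_mul_div_log_le (hlam : 0 ≤ lam) (hc : 0 < c) {G : ℝ} (hG : 0 < G)
    (hG1 : G ≤ 1) :
    ∫ g in Ioc G 1, exp (-lam * g) / log (1 + c * g) ≤ c⁻¹ * log G⁻¹ + 1 := by
  have hpos : ∀ g ∈ Icc G 1, 0 < g := fun g hg => hG.trans_le hg.1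
  have hlog_pos : ∀ g ∈ Icc G 1, 0 < log (1 + c * g) := fun g hg =>
    log_pos (lt_add_of_pos_right 1 (mul_pos hc (hpos g hg)))
  have hint : IntegrableOn (fun g => exp (-lam * g) / log (1 + c * g)) (Icc G 1) :=
    (ContinuousOn.div (by fun_prop)
      (ContinuousOn.log (by fun_prop) fun g hg h => (hlog_pos g hg).ne' (by rw [h, log_zero]))
      fun g hg => (hlog_pos g hg).ne').integrableOn_Icc
  have hcont : ContinuousOn (fun g => (c * g)⁻¹ + 1) (Icc G 1) :=
    ((continuousOn_const.mul continuousOn_id).inv₀ fun g hg =>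
      (mul_pos hc (hpos g hg)).ne').add continuousOn_const
  calc ∫ g in Ioc G 1, exp (-lam * g) / log (1 + c * g)
      ≤ ∫ g in Ioc G 1, ((c * g)⁻¹ + 1) := by
        refine setIntegral_mono_on (hint.mono_set Ioc_subset_Icc_self)
          (hcont.integrableOn_Icc.mono_set Ioc_subset_Icc_self) measurableSet_Ioc fun g hg => ?_
        have hg' : g ∈ Icc G 1 := Ioc_subset_Icc_self hg
        calc exp (-lam * g) / log (1 + c * g) ≤ 1 / log (1 + c * g) := by
              gcongr
              · exact (hlog_pos g hg').le
              · exact exp_le_one_iff.2 (by nlinarith [hpos g hg'])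
          _ ≤ (c * g)⁻¹ + 1 := by
              rw [one_div]; exact inv_log_one_add_le (mul_pos hc (hpos g hg'))
    _ = c⁻¹ * log G⁻¹ + (1 - G) := by
        have hinv : IntervalIntegrable (fun x : ℝ => x⁻¹) volume G 1 :=
          intervalIntegral.intervalIntegrable_inv
            (fun x hx => (hG.trans_le (uIcc_of_le hG1 ▸ hx).1).ne') continuousOn_id
        simp only [← intervalIntegral.integral_of_le hG1, mul_inv]
        rw [intervalIntegral.integral_add (hinv.const_mul c⁻¹) intervalIntegrable_const,
          intervalIntegral.integral_const_mul, integral_inv_of_pos hG one_pos, one_div]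
        simp
    _ ≤ c⁻¹ * log G⁻¹ + 1 := by linarith

lemma exists_setIntegral_Ioi_exp_neg_mul_div_log_le (hlam : 0 < lam) (hc : 0 < c) :
    ∃ C, ∀ G, 0 < G → G ≤ 1 →
      ∫ g in Ioi G, exp (-lam * g) / log (1 + c * g) ≤ c⁻¹ * log G⁻¹ + C := by
  refine ⟨1 + ∫ g in Ioi 1, exp (-lam * g) / log (1 + c * g), fun G hG hG1 => ?_⟩
  have hint := integrableOn_exp_neg_mul_div_log_Ioi hlam hc hG
  rw [← Ioc_union_Ioi_eq_Ioi hG1, setIntegral_union (Ioc_disjoint_Ioi le_rfl) measurableSet_Ioi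
    (hint.mono_set Ioc_subset_Ioi_self) (hint.mono_set (Ioi_subset_Ioi hG1))]
  linarith [setIntegral_Ioc_exp_neg_mul_div_log_le hlam.le hc hG hG1]

lemma exp_neg_div_mul_le_exp_neg_mul_div_log (hlam : 0 ≤ lam) (hc : 0 < c) {G : ℝ} (hG : 0 < G)
    (hG1 : G ≤ 1) : exp (-lam) / (c * G) ≤ exp (-lam * G) / log (1 + c * G) := by
  have hcG : 0 < c * G := mul_pos hc hG
  refine div_le_div₀ (exp_pos _).le (exp_le_exp.2 (by nlinarith))
    (log_pos (lt_add_of_pos_right 1 hcG)) ?_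
  linarith [log_le_sub_one_of_pos (by positivity : 0 < 1 + c * G)]

end

/-- Behavior of `Ξ₁` near zero (step in the proof of Lemma 2):
`Ξ₁(G) = 2λ·∫_G^∞ e^{−λg}/ln(1+c·g) dg − e^{−λG}/ln(1+c·G)` tends to `−∞`
as `G → 0⁺`. -/
theorem Xi1_tendsto_atBot_near_zero (lam c : ℝ) (hlam : 0 < lam) (hc : 0 < c) :
    Filter.Tendsto
      (fun G : ℝ => 2 * lam * (∫ g in Set.Ioi G, Real.exp (-lam * g) / Real.log (1 + c * g)) -
        Real.exp (-lam * G) / Real.log (1 + c * G))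
      (nhdsWithin 0 (Set.Ioi 0)) Filter.atBot := by
  obtain ⟨C, hC⟩ := exists_setIntegral_Ioi_exp_neg_mul_div_log_le hlam hc
  have hbound := (tendsto_mul_log_add_sub_mul_atTop_atBot (2 * lam / c) (2 * lam * C)
    (div_pos (exp_pos (-lam)) hc)).comp tendsto_inv_nhdsGT_zero
  refine tendsto_atBot_mono' _ ?_ hbound
  filter_upwards [Ioc_mem_nhdsGT one_pos] with G ⟨hG0, hG1⟩
  calc 2 * lam * (∫ g in Ioi G, exp (-lam * g) / log (1 + c * g)) -
        exp (-lam * G) / log (1 + c * G)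
      ≤ 2 * lam * (c⁻¹ * log G⁻¹ + C) - exp (-lam) / (c * G) := by
        gcongr 2 * lam * ?_ - ?_
        · exact hC G hG0 hG1
        · exact exp_neg_div_mul_le_exp_neg_mul_div_log hlam.le hc hG0 hG1
    _ = 2 * lam / c * log G⁻¹ + 2 * lam * C - exp (-lam) / c * G⁻¹ := by ring
end

section
/- Unique zero and sign pattern of Ξ₁ (step in the proof of Lemma 2). Let λ > 0 and c > 0, define Ξ₁(G) := 2λ · ∫_G^∞ e^{−λg}/ln(1 + c·g) dg − e^{−λG}/ln(1 + c·G) for G > 0, and let x† be the unique zero in (0, ∞) of x ↦ c − λ·(1 + c·x)·ln(1 + c·x). Then there exists a unique G‡ ∈ (0, ∞) with Ξ₁(G‡) = 0; moreover G‡ ≤ x†, Ξ₁(G) < 0 for 0 < G < G‡, and Ξ₁(G) > 0 for G > G‡. -/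
/-!
Write `f(g) = e^{-λg} / ln(1 + cg)`, so that `Ξ₁ = 2λ ∫_G^∞ f - f`. Differentiating the tail
integral gives `Ξ₁'(G) = e^{-λG} ψ(G) / ((1 + cG) ln²(1 + cG))` with
`ψ(x) = c - λ(1 + cx) ln(1 + cx)`, and `ψ` is strictly decreasing with `ψ(x†) = 0`; hence `Ξ₁`
increases strictly on `(0, x†]` and decreases strictly on `[x†, ∞)`. Since
`0 ≤ ∫_G^∞ f ≤ f(G)/λ`, we get `|Ξ₁| ≤ f → 0` at infinity, so `Ξ₁ > 0` on `[x†, ∞)`. Near `0`,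
`f` is decreasing and blows up, so `∫_a^s f ≤ s f(a)` gives `Ξ₁(a) ≤ 2λ∫_s^∞ f - f(a)/2 → -∞`
for `s = 1/(4λ)`. The intermediate value theorem on `(0, x†]` produces the zero `G‡`.
-/

open MeasureTheory Set Real Filter Topology

lemma hasDerivAt_setIntegral_Ioi {E : Type*} [NormedAddCommGroup E] [NormedSpace ℝ E]
    [CompleteSpace E] {f : ℝ → E} {a G : ℝ} (hf : IntegrableOn f (Ioi a))
    (haG : a < G) (hcont : ContinuousAt f G) :
    HasDerivAt (fun x => ∫ t in Ioi x, f t) (-f G) G := by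
  have hprim : HasDerivAt (fun x => ∫ t in a..x, f t) (f G) G :=
    intervalIntegral.integral_hasDerivAt_right
      ((intervalIntegrable_iff_integrableOn_Ioc_of_le haG.le).2 (hf.mono_set Ioc_subset_Ioi_self))
      (AEStronglyMeasurable.stronglyMeasurableAtFilter_of_mem hf.1 (Ioi_mem_nhds haG)) hcont
  have hsplit : (fun x => ∫ t in Ioi x, f t)
      =ᶠ[𝓝 G] fun x => (∫ t in Ioi a, f t) - ∫ t in a..x, f t := by
    filter_upwards [Ioi_mem_nhds haG] with x hx
    rw [← intervalIntegral.integral_Ioi_sub_Ioi hf hx.le, sub_sub_cancel]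
  simpa using ((hasDerivAt_const G _).sub hprim).congr_of_eventuallyEq hsplit

lemma StrictAntiOn.pos_of_tendsto_atTop_zero {φ : ℝ → ℝ} {x G : ℝ}
    (hφ : StrictAntiOn φ (Ici x)) (hlim : Tendsto φ atTop (𝓝 0)) (hG : x ≤ G) : 0 < φ G := by
  have hnext : 0 ≤ φ (G + 1) := le_of_tendsto hlim <| by
    filter_upwards [eventually_ge_atTop (G + 1)] with y hy
    exact hφ.antitoneOn (show x ≤ G + 1 by linarith) (show x ≤ y by linarith) hy
  exact hnext.trans_lt (hφ hG (show x ≤ G + 1 by linarith) (lt_add_one G))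

lemma exists_zero_sign_pattern_of_strictMonoOn_Ioc {φ : ℝ → ℝ} {x a : ℝ}
    (hmono : StrictMonoOn φ (Ioc 0 x)) (hcont : ContinuousOn φ (Ioc 0 x)) (ha : a ∈ Ioc 0 x)
    (hneg : φ a < 0) (hpos : ∀ G, x ≤ G → 0 < φ G) :
    ∃ Gd, 0 < Gd ∧ φ Gd = 0 ∧ (∀ G, 0 < G → φ G = 0 → G = Gd) ∧ Gd ≤ x ∧
      (∀ G, 0 < G → G < Gd → φ G < 0) ∧ ∀ G, Gd < G → 0 < φ G := by
  have hIcc : Icc a x ⊆ Ioc 0 x := Icc_subset_Ioc_iff ha.2 |>.2 ⟨ha.1, le_rfl⟩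
  obtain ⟨Gd, hGd, hzero⟩ := intermediate_value_Icc ha.2 (hcont.mono hIcc)
    ⟨hneg.le, (hpos x le_rfl).le⟩
  have hGd' : Gd ∈ Ioc 0 x := hIcc hGd
  have hbelow : ∀ G, 0 < G → G < Gd → φ G < 0 := fun G hG hlt =>
    hzero ▸ hmono ⟨hG, hlt.le.trans hGd.2⟩ hGd' hlt
  have habove : ∀ G, Gd < G → 0 < φ G := by
    intro G hlt
    rcases le_or_gt G x with hx | hx
    · exact hzero ▸ hmono hGd' ⟨hGd'.1.trans hlt, hx⟩ hlt
    · exact hpos G hx.le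
  refine ⟨Gd, hGd'.1, hzero, fun G hG hG0 => ?_, hGd.2, hbelow, habove⟩
  rcases lt_trichotomy G Gd with hlt | heq | hgt
  · exact absurd hG0 (hbelow G hG hlt).ne
  · exact heq
  · exact absurd hG0 (habove G hgt).ne'

namespace Xi1

noncomputable def integrand (lam c g : ℝ) : ℝ := exp (-lam * g) / log (1 + c * g)

noncomputable def tail (lam c G : ℝ) : ℝ := ∫ g in Ioi G, integrand lam c g

noncomputable def xi (lam c G : ℝ) : ℝ := 2 * lam * tail lam c G - integrand lam c G

noncomputable def psi (lam c x : ℝ) : ℝ := c - lam * (1 + c * x) * log (1 + c * x)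

variable {lam c : ℝ}

lemma log_one_add_mul_pos (hc : 0 < c) {g : ℝ} (hg : 0 < g) : 0 < log (1 + c * g) :=
  log_pos (by nlinarith)

lemma log_one_add_mul_le (hc : 0 ≤ c) {x y : ℝ} (hx : 0 ≤ x) (hxy : x ≤ y) :
    log (1 + c * x) ≤ log (1 + c * y) :=
  log_le_log (by nlinarith) (by nlinarith)

lemma integrand_pos (hc : 0 < c) {g : ℝ} (hg : 0 < g) : 0 < integrand lam c g :=
  div_pos (exp_pos _) (log_one_add_mul_pos hc hg)

lemma continuousAt_integrand (hc : 0 < c) {g : ℝ} (hg : 0 < g) :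
    ContinuousAt (integrand lam c) g := by
  have : 1 + c * g ≠ 0 := by nlinarith
  unfold integrand
  exact (continuous_exp.comp (continuous_const_mul _)).continuousAt.div
    (by fun_prop (disch := exact this)) (log_one_add_mul_pos hc hg).ne'

lemma integrand_antitoneOn (hlam : 0 ≤ lam) (hc : 0 < c) :
    AntitoneOn (integrand lam c) (Ioi 0) := fun x hx _ _ hxy =>
  div_le_div₀ (exp_pos _).le (exp_le_exp.2 (by nlinarith)) (log_one_add_mul_pos hc hx)
    (log_one_add_mul_le hc.le (le_of_lt hx) hxy)

lemma integrand_le_exp_div (hc : 0 < c) {G g : ℝ} (hG : 0 < G) (hg : G ≤ g) :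
    integrand lam c g ≤ exp (-lam * g) / log (1 + c * G) :=
  div_le_div_of_nonneg_left (exp_pos _).le (log_one_add_mul_pos hc hG)
    (log_one_add_mul_le hc.le hG.le hg)

lemma integrableOn_integrand (hlam : 0 < lam) (hc : 0 < c) {G : ℝ} (hG : 0 < G) :
    IntegrableOn (integrand lam c) (Ioi G) := by
  have hbound : IntegrableOn (fun g => exp (-lam * g) / log (1 + c * G)) (Ioi G) :=
    (exp_neg_integrableOn_Ioi G hlam).div_const _
  refine Integrable.mono' hbound
    ((continuousOn_of_forall_continuousAt fun g hg => continuousAt_integrand hc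
      (hG.trans hg)).aestronglyMeasurable measurableSet_Ioi) ?_
  refine (ae_restrict_iff' measurableSet_Ioi).2 (ae_of_all _ fun g hg => ?_)
  rw [norm_of_nonneg (integrand_pos hc (hG.trans hg)).le]
  exact integrand_le_exp_div hc hG hg.out.le

lemma tail_nonneg (hc : 0 < c) {G : ℝ} (hG : 0 < G) : 0 ≤ tail lam c G :=
  setIntegral_nonneg measurableSet_Ioi fun _ hg => (integrand_pos hc (hG.trans hg)).le

lemma tail_le_integrand_div (hlam : 0 < lam) (hc : 0 < c) {G : ℝ} (hG : 0 < G) :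
    tail lam c G ≤ integrand lam c G / lam := by
  calc tail lam c G ≤ ∫ g in Ioi G, exp (-lam * g) / log (1 + c * G) :=
        setIntegral_mono_on (integrableOn_integrand hlam hc hG)
          ((exp_neg_integrableOn_Ioi G hlam).div_const _) measurableSet_Ioi
          fun _ hg => integrand_le_exp_div hc hG hg.out.le
    _ = integrand lam c G / lam := by
        rw [integral_div, integral_exp_mul_Ioi (neg_lt_zero.2 hlam), integrand]
        field_simp

lemma tail_le_mul_integrand_add_tail (hlam : 0 < lam) (hc : 0 < c) {a s : ℝ} (ha : 0 < a)
    (has : a ≤ s) :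
    tail lam c a ≤ (s - a) * integrand lam c a + tail lam c s := by
  have hsplit : tail lam c a = (∫ g in a..s, integrand lam c g) + tail lam c s := by
    rw [← intervalIntegral.integral_Ioi_sub_Ioi (integrableOn_integrand hlam hc ha) has, tail,
      tail, sub_add_cancel]
  have hhead : (∫ g in a..s, integrand lam c g) ≤ ∫ _ in a..s, integrand lam c a :=
    intervalIntegral.integral_mono_on has
      ((intervalIntegrable_iff_integrableOn_Ioc_of_le has).2
        ((integrableOn_integrand hlam hc ha).mono_set Ioc_subset_Ioi_self))
      intervalIntegrable_const fun _ hg =>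
        integrand_antitoneOn hlam.le hc ha (ha.trans_le hg.1) hg.1
  rw [intervalIntegral.integral_const, smul_eq_mul] at hhead
  linarith

lemma tendsto_integrand_atTop (hlam : 0 < lam) (hc : 0 < c) :
    Tendsto (integrand lam c) atTop (𝓝 0) := by
  have hexp : Tendsto (fun g => exp (-lam * g)) atTop (𝓝 0) :=
    tendsto_exp_atBot.comp (tendsto_id.const_mul_atTop_of_neg (neg_lt_zero.2 hlam))
  have hlog : Tendsto (fun g => log (1 + c * g)) atTop atTop :=
    tendsto_log_atTop.comp (tendsto_atTop_add_const_left _ _ (tendsto_id.const_mul_atTop hc))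
  show Tendsto (fun g => exp (-lam * g) / log (1 + c * g)) atTop (𝓝 0)
  simpa only [div_eq_mul_inv, zero_mul, Pi.inv_apply] using hexp.mul hlog.inv_tendsto_atTop

lemma tendsto_integrand_nhdsGT_zero (hc : 0 < c) :
    Tendsto (integrand lam c) (𝓝[>] 0) atTop := by
  have hexp : Tendsto (fun g => exp (-lam * g)) (𝓝[>] 0) (𝓝 1) := by
    have : Continuous fun g => exp (-lam * g) := by fun_prop
    simpa using (this.tendsto 0).mono_left nhdsWithin_le_nhds
  have hlog : Tendsto (fun g => log (1 + c * g)) (𝓝[>] 0) (𝓝[>] 0) := by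
    refine tendsto_nhdsWithin_iff.2 ⟨?_, ?_⟩
    · have : ContinuousAt (fun g => log (1 + c * g)) 0 := by fun_prop (disch := norm_num)
      simpa using this.tendsto.mono_left nhdsWithin_le_nhds
    · filter_upwards [self_mem_nhdsWithin] with g hg using log_one_add_mul_pos hc hg
  exact hexp.pos_mul_atTop one_pos (tendsto_inv_nhdsGT_zero.comp hlog)

lemma tendsto_xi_atTop (hlam : 0 < lam) (hc : 0 < c) : Tendsto (xi lam c) atTop (𝓝 0) := by
  have hf := tendsto_integrand_atTop hlam hc
  refine tendsto_of_tendsto_of_tendsto_of_le_of_le' (by simpa using hf.neg) hf ?_ ?_ <;>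
    filter_upwards [eventually_gt_atTop 0] with G hG
  · have := mul_nonneg hlam.le (tail_nonneg (lam := lam) hc hG)
    unfold xi
    linarith
  · have := tail_le_integrand_div hlam hc hG
    rw [le_div_iff₀ hlam] at this
    unfold xi
    linarith

lemma tendsto_xi_nhdsGT_zero (hlam : 0 < lam) (hc : 0 < c) :
    Tendsto (xi lam c) (𝓝[>] 0) atBot := by
  obtain ⟨s, hs, hlams⟩ : ∃ s, 0 < s ∧ 2 * lam * s = 1 / 2 :=
    ⟨1 / (4 * lam), by positivity, by field_simp; ring⟩
  have hbound : ∀ᶠ a in 𝓝[>] 0, xi lam c a ≤ 2 * lam * tail lam c s - integrand lam c a / 2 := by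
    filter_upwards [Ioc_mem_nhdsGT hs] with a ha
    have htail := tail_le_mul_integrand_add_tail hlam hc ha.1 ha.2
    have hpos := integrand_pos (lam := lam) hc ha.1
    unfold xi
    nlinarith [mul_pos hlam ha.1]
  refine tendsto_atBot_mono' _ hbound (tendsto_atBot_add_const_left _ _ ?_)
  exact tendsto_neg_atTop_atBot.comp ((tendsto_integrand_nhdsGT_zero hc).atTop_div_const two_pos)

lemma hasDerivAt_integrand (hc : 0 < c) {g : ℝ} (hg : 0 < g) :
    HasDerivAt (integrand lam c)
      ((-lam * exp (-lam * g) * log (1 + c * g) - exp (-lam * g) * (c / (1 + c * g)))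
        / log (1 + c * g) ^ 2) g := by
  have hexp : HasDerivAt (fun x => exp (-lam * x)) (-lam * exp (-lam * g)) g := by
    simpa [mul_comm] using ((hasDerivAt_id g).const_mul (-lam)).exp
  have hlog : HasDerivAt (fun x => log (1 + c * x)) (c / (1 + c * g)) g := by
    simpa using (((hasDerivAt_id' g).const_mul c).const_add 1).log (by positivity)
  exact hexp.div hlog (log_one_add_mul_pos hc hg).ne'

lemma hasDerivAt_xi (hlam : 0 < lam) (hc : 0 < c) {G : ℝ} (hG : 0 < G) :
    HasDerivAt (xi lam c)
      (exp (-lam * G) * psi lam c G / ((1 + c * G) * log (1 + c * G) ^ 2)) G := by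
  have htail : HasDerivAt (tail lam c) (-integrand lam c G) G :=
    hasDerivAt_setIntegral_Ioi (integrableOn_integrand hlam hc (half_pos hG)) (half_lt_self hG)
      (continuousAt_integrand hc hG)
  refine ((htail.const_mul (2 * lam)).sub (hasDerivAt_integrand hc hG)).congr_deriv ?_
  have : 0 < 1 + c * G := by nlinarith
  have := log_one_add_mul_pos hc hG
  unfold integrand psi
  field_simp
  ring

lemma psi_strictAntiOn (hlam : 0 < lam) (hc : 0 < c) : StrictAntiOn (psi lam c) (Ici 0) := by
  intro x hx y _ hxy
  have hlog : log (1 + c * x) ≤ log (1 + c * y) := log_one_add_mul_le hc.le hx hxy.le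
  have hlogy : 0 < log (1 + c * y) := log_one_add_mul_pos hc (hx.out.trans_lt hxy)
  have : (1 + c * x) * log (1 + c * x) < (1 + c * y) * log (1 + c * y) := by
    rw [mul_comm, mul_comm (1 + c * y)]
    exact mul_lt_mul' hlog (by nlinarith) (by nlinarith [hx.out]) hlogy
  unfold psi
  nlinarith

lemma continuousOn_xi (hlam : 0 < lam) (hc : 0 < c) : ContinuousOn (xi lam c) (Ioi 0) :=
  fun _ hG => (hasDerivAt_xi hlam hc hG).continuousAt.continuousWithinAt

lemma xi_strictMonoOn (hlam : 0 < lam) (hc : 0 < c) {xd : ℝ} (hzero : psi lam c xd = 0) :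
    StrictMonoOn (xi lam c) (Ioc 0 xd) := by
  refine strictMonoOn_of_deriv_pos (convex_Ioc 0 xd)
    ((continuousOn_xi hlam hc).mono Ioc_subset_Ioi_self) fun G hG => ?_
  rw [interior_Ioc] at hG
  have hψ : 0 < psi lam c G :=
    hzero ▸ psi_strictAntiOn hlam hc hG.1.le (hG.1.trans hG.2).le hG.2
  have := log_one_add_mul_pos hc hG.1
  rw [(hasDerivAt_xi hlam hc hG.1).deriv]
  have : 0 < 1 + c * G := by nlinarith [hG.1]
  positivity

lemma xi_strictAntiOn (hlam : 0 < lam) (hc : 0 < c) {xd : ℝ} (hxd : 0 < xd)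
    (hzero : psi lam c xd = 0) : StrictAntiOn (xi lam c) (Ici xd) := by
  refine strictAntiOn_of_deriv_neg (convex_Ici xd)
    ((continuousOn_xi hlam hc).mono (Ici_subset_Ioi.2 hxd)) fun G hG => ?_
  rw [interior_Ici] at hG
  have hG0 : 0 < G := hxd.trans hG
  have hψ : psi lam c G < 0 := hzero ▸ psi_strictAntiOn hlam hc hxd.le hG0.le hG
  have := log_one_add_mul_pos hc hG0
  rw [(hasDerivAt_xi hlam hc hG0).deriv]
  have : 0 < 1 + c * G := by nlinarith
  exact div_neg_of_neg_of_pos (mul_neg_of_pos_of_neg (exp_pos _) hψ) (by positivity)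

end Xi1

theorem Xi1_unique_zero_sign_pattern_general (lam c : ℝ) (hlam : 0 < lam) (hc : 0 < c)
    (xd : ℝ) (hxd : 0 < xd)
    (hzero : c - lam * (1 + c * xd) * Real.log (1 + c * xd) = 0) :
    ∃ Gd : ℝ, 0 < Gd ∧
      (2 * lam * (∫ g in Set.Ioi Gd, Real.exp (-lam * g) / Real.log (1 + c * g)) -
        Real.exp (-lam * Gd) / Real.log (1 + c * Gd) = 0) ∧
      (∀ G : ℝ, 0 < G →
        2 * lam * (∫ g in Set.Ioi G, Real.exp (-lam * g) / Real.log (1 + c * g)) -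
          Real.exp (-lam * G) / Real.log (1 + c * G) = 0 → G = Gd) ∧
      Gd ≤ xd ∧
      (∀ G : ℝ, 0 < G → G < Gd →
        2 * lam * (∫ g in Set.Ioi G, Real.exp (-lam * g) / Real.log (1 + c * g)) -
          Real.exp (-lam * G) / Real.log (1 + c * G) < 0) ∧
      (∀ G : ℝ, Gd < G →
        0 < 2 * lam * (∫ g in Set.Ioi G, Real.exp (-lam * g) / Real.log (1 + c * g)) -
          Real.exp (-lam * G) / Real.log (1 + c * G)) := by
  open Xi1 in
  obtain ⟨a, hneg, ha⟩ : ∃ a, xi lam c a < 0 ∧ a ∈ Ioc 0 xd :=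
    (((tendsto_xi_nhdsGT_zero hlam hc).eventually_lt_atBot 0).and (Ioc_mem_nhdsGT hxd)).exists
  exact exists_zero_sign_pattern_of_strictMonoOn_Ioc (xi_strictMonoOn hlam hc hzero)
    ((continuousOn_xi hlam hc).mono Ioc_subset_Ioi_self) ha hneg
    fun G hG => (xi_strictAntiOn hlam hc hxd hzero).pos_of_tendsto_atTop_zero
      (tendsto_xi_atTop hlam hc) hG

/-- Unique zero and sign pattern of `Ξ₁` (step in the proof of Lemma 2): with
`Ξ₁(G) = 2λ·∫_G^∞ e^{−λg}/ln(1+c·g) dg − e^{−λG}/ln(1+c·G)` and `x†` the unique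
zero in `(0, ∞)` of `x ↦ c − λ·(1+c·x)·ln(1+c·x)`, there exists a unique `G‡ > 0`
with `Ξ₁(G‡) = 0`; moreover `G‡ ≤ x†`, `Ξ₁ < 0` on `(0, G‡)` and `Ξ₁ > 0` on
`(G‡, ∞)`. -/
theorem Xi1_unique_zero_sign_pattern (lam c : ℝ) (hlam : 0 < lam) (hc : 0 < c)
    (xd : ℝ) (hxd : 0 < xd)
    (hzero : c - lam * (1 + c * xd) * Real.log (1 + c * xd) = 0)
    (huniq : ∀ y : ℝ, 0 < y → c - lam * (1 + c * y) * Real.log (1 + c * y) = 0 → y = xd) :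
    ∃ Gd : ℝ, 0 < Gd ∧
      (2 * lam * (∫ g in Set.Ioi Gd, Real.exp (-lam * g) / Real.log (1 + c * g)) -
        Real.exp (-lam * Gd) / Real.log (1 + c * Gd) = 0) ∧
      (∀ G : ℝ, 0 < G →
        2 * lam * (∫ g in Set.Ioi G, Real.exp (-lam * g) / Real.log (1 + c * g)) -
          Real.exp (-lam * G) / Real.log (1 + c * G) = 0 → G = Gd) ∧
      Gd ≤ xd ∧
      (∀ G : ℝ, 0 < G → G < Gd →
        2 * lam * (∫ g in Set.Ioi G, Real.exp (-lam * g) / Real.log (1 + c * g)) -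
          Real.exp (-lam * G) / Real.log (1 + c * G) < 0) ∧
      (∀ G : ℝ, Gd < G →
        0 < 2 * lam * (∫ g in Set.Ioi G, Real.exp (-lam * g) / Real.log (1 + c * g)) -
          Real.exp (-lam * G) / Real.log (1 + c * G)) :=
  Xi1_unique_zero_sign_pattern_general lam c hlam hc xd hxd hzero
end
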